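/- If B₁ and B₂ are crystals associated with a symmetrizable Kac–Moody algebra, then the set B₁ × B₂ equipped with the tensor product maps (wt(b₁⊗b₂)=wt(b₁)+wt(b₂), ε_i(b₁⊗b₂)=max(ε_i(b₁), ε_i(b₂)−⟨h_i,wt(b₁)⟩), φ_i(b₁⊗b₂)=max(φ_i(b₂), φ_i(b₁)+⟨h_i,wt(b₂)⟩), with ẽ_i acting on the first factor when φ_i(b₁)≥ε_i(b₂) and on the second otherwise, and f̃_i acting on the first factor when φ_i(b₁)>ε_i(b₂) and on the second otherwise) again satisfies all the crystal axioms. -/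

import Mathlib

open scoped Classical

/-- Data of a crystal associated with a symmetrizable Kac–Moody algebra:
a set `B` with maps `wt : B → P`, `ẽ_i, f̃_i : B → B ∪ {0}` (encoded via `Option`),
and `ε_i, φ_i : B → ℤ ∪ {−∞}` (encoded via `WithBot ℤ`). -/
structure KMCrystalData (I P B : Type) [AddCommGroup P] where
  wt : B → P
  e : I → B → Option B
  f : I → B → Option B
  eps : I → B → WithBot ℤ
  phi : I → B → WithBot ℤ

/-- The crystal axioms, relative to the simple roots `α : I → P` and the pairings
`pair i = ⟨h_i, ·⟩` with the simple coroots. -/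
structure IsKMCrystal {I P B : Type} [AddCommGroup P]
    (α : I → P) (pair : I → P →+ ℤ) (C : KMCrystalData I P B) : Prop where
  phi_eq : ∀ i b, C.phi i b = C.eps i b + ((pair i (C.wt b) : ℤ) : WithBot ℤ)
  wt_e : ∀ i b b', C.e i b = some b' → C.wt b' = C.wt b + α i
  wt_f : ∀ i b b', C.f i b = some b' → C.wt b' = C.wt b - α i
  eps_e : ∀ i b b', C.e i b = some b' → C.eps i b' = C.eps i b + ((-1 : ℤ) : WithBot ℤ)
  phi_e : ∀ i b b', C.e i b = some b' → C.phi i b' = C.phi i b + ((1 : ℤ) : WithBot ℤ)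
  eps_f : ∀ i b b', C.f i b = some b' → C.eps i b' = C.eps i b + ((1 : ℤ) : WithBot ℤ)
  phi_f : ∀ i b b', C.f i b = some b' → C.phi i b' = C.phi i b + ((-1 : ℤ) : WithBot ℤ)
  ef : ∀ i b b', C.f i b = some b' ↔ C.e i b' = some b
  phi_bot : ∀ i b, C.phi i b = ⊥ → C.e i b = none ∧ C.f i b = none

/-- The tensor product `B₁ ⊗ B₂` of two crystals: the set `B₁ × B₂` with the
tensor product rule for the maps. -/
noncomputable def KMtensor {I P B1 B2 : Type} [AddCommGroup P] (pair : I → P →+ ℤ)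
    (C1 : KMCrystalData I P B1) (C2 : KMCrystalData I P B2) :
    KMCrystalData I P (B1 × B2) where
  wt p := C1.wt p.1 + C2.wt p.2
  eps i p := max (C1.eps i p.1) (C2.eps i p.2 + ((-(pair i (C1.wt p.1)) : ℤ) : WithBot ℤ))
  phi i p := max (C2.phi i p.2) (C1.phi i p.1 + ((pair i (C2.wt p.2) : ℤ) : WithBot ℤ))
  e i p := if C2.eps i p.2 ≤ C1.phi i p.1 then (C1.e i p.1).map (fun b => (b, p.2))
           else (C2.e i p.2).map (fun b => (p.1, b))
  f i p := if C2.eps i p.2 < C1.phi i p.1 then (C1.f i p.1).map (fun b => (b, p.2))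
           else (C2.f i p.2).map (fun b => (p.1, b))


/-! In `b₁ ⊗ b₂` the comparison of `φ_i(b₁)` with `ε_i(b₂)` decides which term attains each of
the two maxima: `ε_i(b₁)` and `φ_i(b₁) + ⟨h_i, wt b₂⟩` when `ε_i(b₂) ≤ φ_i(b₁)`, the other two
when `φ_i(b₁) ≤ ε_i(b₂)` (at equality both formulas agree). Applying `ẽ_i` to the factor the rule
selects keeps the pair on the same side of this comparison, so `ε_i` and `φ_i` of the tensor
product move exactly like those of that factor. Since the values are integers, `x < φ_i(ẽ_i b)`
is `x ≤ φ_i(b)` and `x ≤ ε_i(ẽ_i b)` is `x < ε_i(b)`: this trades the strict inequality in the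
rule for `f̃_i` against the weak one in the rule for `ẽ_i`, which makes them mutually inverse.
The axioms for `f̃_i` then follow from those for `ẽ_i`. -/

namespace WithBot

variable {G : Type*} [AddCommGroup G] {a b : WithBot G} {n : G}

theorem eq_add_coe_neg_of_eq_add_coe (h : a = b + (n : WithBot G)) :
    b = a + ((-n : G) : WithBot G) := by
  cases b <;> simp_all [← coe_add]

variable [LinearOrder G] [IsOrderedAddMonoid G]

theorem add_coe_neg_le_iff : a + ((-n : G) : WithBot G) ≤ b ↔ a ≤ b + (n : WithBot G) := by
  cases a <;> cases b <;> simp [← coe_add, add_comm]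

theorem le_add_coe_neg_iff : a ≤ b + ((-n : G) : WithBot G) ↔ a + (n : WithBot G) ≤ b := by
  cases a <;> cases b <;> simp [← coe_add, add_comm]

theorem lt_add_one_iff_le {a b : WithBot ℤ} (hb : b ≠ ⊥) :
    a < b + ((1 : ℤ) : WithBot ℤ) ↔ a ≤ b := by
  lift b to ℤ using hb
  cases a
  · simp
  · rw [← coe_add, coe_lt_coe, coe_le_coe, Int.lt_add_one_iff]

theorem le_add_neg_one_iff_lt {a b : WithBot ℤ} (hb : b ≠ ⊥) :
    a ≤ b + ((-1 : ℤ) : WithBot ℤ) ↔ a < b := by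
  lift b to ℤ using hb
  cases a
  · simp
  · rw [← coe_add, coe_lt_coe, coe_le_coe, ← sub_eq_add_neg, Int.le_sub_one_iff]

end WithBot

namespace IsKMCrystal

variable {I P B : Type} [AddCommGroup P] {α : I → P} {pair : I → P →+ ℤ}
  {C : KMCrystalData I P B} {i : I} {b b' : B} {x : WithBot ℤ}

theorem of_e
    (phi_eq : ∀ i b, C.phi i b = C.eps i b + ((pair i (C.wt b) : ℤ) : WithBot ℤ))
    (wt_e : ∀ i b b', C.e i b = some b' → C.wt b' = C.wt b + α i)
    (eps_e : ∀ i b b', C.e i b = some b' → C.eps i b' = C.eps i b + ((-1 : ℤ) : WithBot ℤ))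
    (phi_e : ∀ i b b', C.e i b = some b' → C.phi i b' = C.phi i b + ((1 : ℤ) : WithBot ℤ))
    (ef : ∀ i b b', C.f i b = some b' ↔ C.e i b' = some b)
    (phi_bot : ∀ i b, C.phi i b = ⊥ → C.e i b = none ∧ C.f i b = none) :
    IsKMCrystal α pair C where
  phi_eq := phi_eq
  wt_e := wt_e
  wt_f i b b' hf := by rw [wt_e i b' b ((ef i b b').mp hf), add_sub_cancel_right]
  eps_e := eps_e
  phi_e := phi_e
  eps_f i b b' hf := WithBot.eq_add_coe_neg_of_eq_add_coe (eps_e i b' b ((ef i b b').mp hf))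
  phi_f i b b' hf := WithBot.eq_add_coe_neg_of_eq_add_coe (phi_e i b' b ((ef i b b').mp hf))
  ef := ef
  phi_bot := phi_bot

theorem phi_ne_bot_of_e (h : IsKMCrystal α pair C) (he : C.e i b = some b') : C.phi i b ≠ ⊥ :=
  fun hbot ↦ by simp [(h.phi_bot i b hbot).1] at he

theorem eps_ne_bot_of_e (h : IsKMCrystal α pair C) (he : C.e i b = some b') : C.eps i b ≠ ⊥ :=
  fun hbot ↦ h.phi_ne_bot_of_e he (by rw [h.phi_eq, hbot, WithBot.bot_add])

theorem lt_phi_e_iff (h : IsKMCrystal α pair C) (he : C.e i b = some b') :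
    x < C.phi i b' ↔ x ≤ C.phi i b := by
  rw [h.phi_e i b b' he, WithBot.lt_add_one_iff_le (h.phi_ne_bot_of_e he)]

theorem le_eps_e_iff (h : IsKMCrystal α pair C) (he : C.e i b = some b') :
    x ≤ C.eps i b' ↔ x < C.eps i b := by
  rw [h.eps_e i b b' he, WithBot.le_add_neg_one_iff_lt (h.eps_ne_bot_of_e he)]

end IsKMCrystal

namespace KMtensor

variable {I P B1 B2 : Type} [AddCommGroup P] {α : I → P} {pair : I → P →+ ℤ}
  {C1 : KMCrystalData I P B1} {C2 : KMCrystalData I P B2} {i : I} {b1 : B1} {b2 : B2}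
  {p : B1 × B2}

theorem wt_mk : (KMtensor pair C1 C2).wt (b1, b2) = C1.wt b1 + C2.wt b2 := rfl

theorem e_eq_some_iff : (KMtensor pair C1 C2).e i (b1, b2) = some p ↔
    (C2.eps i b2 ≤ C1.phi i b1 ∧ ∃ c, C1.e i b1 = some c ∧ p = (c, b2)) ∨
    (C1.phi i b1 < C2.eps i b2 ∧ ∃ c, C2.e i b2 = some c ∧ p = (b1, c)) := by
  simp only [KMtensor]
  split_ifs with h
  · simp [h, eq_comm]
  · simp [not_le.mp h, eq_comm]

theorem f_eq_some_iff : (KMtensor pair C1 C2).f i (b1, b2) = some p ↔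
    (C2.eps i b2 < C1.phi i b1 ∧ ∃ c, C1.f i b1 = some c ∧ p = (c, b2)) ∨
    (C1.phi i b1 ≤ C2.eps i b2 ∧ ∃ c, C2.f i b2 = some c ∧ p = (b1, c)) := by
  simp only [KMtensor]
  split_ifs with h
  · simp [h, eq_comm]
  · simp [not_lt.mp h, eq_comm]

theorem eps_of_le (h1 : IsKMCrystal α pair C1) (h : C2.eps i b2 ≤ C1.phi i b1) :
    (KMtensor pair C1 C2).eps i (b1, b2) = C1.eps i b1 :=
  max_eq_left (WithBot.add_coe_neg_le_iff.mpr (h1.phi_eq i b1 ▸ h))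

theorem eps_of_ge (h1 : IsKMCrystal α pair C1) (h : C1.phi i b1 ≤ C2.eps i b2) :
    (KMtensor pair C1 C2).eps i (b1, b2) = C2.eps i b2 + ((-(pair i (C1.wt b1)) : ℤ) : WithBot ℤ) :=
  max_eq_right (WithBot.le_add_coe_neg_iff.mpr (h1.phi_eq i b1 ▸ h))

theorem phi_of_le (h2 : IsKMCrystal α pair C2) (h : C2.eps i b2 ≤ C1.phi i b1) :
    (KMtensor pair C1 C2).phi i (b1, b2) = C1.phi i b1 + ((pair i (C2.wt b2) : ℤ) : WithBot ℤ) :=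
  max_eq_right (h2.phi_eq i b2 ▸ add_le_add_left h _)

theorem phi_of_ge (h2 : IsKMCrystal α pair C2) (h : C1.phi i b1 ≤ C2.eps i b2) :
    (KMtensor pair C1 C2).phi i (b1, b2) = C2.phi i b2 :=
  max_eq_left (h2.phi_eq i b2 ▸ add_le_add_left h _)

variable (h1 : IsKMCrystal α pair C1) (h2 : IsKMCrystal α pair C2)
include h1 h2

theorem phi_eq : (KMtensor pair C1 C2).phi i (b1, b2) = (KMtensor pair C1 C2).eps i (b1, b2) +
    ((pair i ((KMtensor pair C1 C2).wt (b1, b2)) : ℤ) : WithBot ℤ) := by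
  rw [wt_mk, map_add, WithBot.coe_add]
  rcases le_total (C2.eps i b2) (C1.phi i b1) with h | h
  · rw [phi_of_le h2 h, eps_of_le h1 h, h1.phi_eq, add_assoc]
  · rw [phi_of_ge h2 h, eps_of_ge h1 h, h2.phi_eq, add_assoc, ← add_assoc (WithBot.some _),
      ← WithBot.coe_add, neg_add_cancel, WithBot.coe_zero, zero_add]

theorem wt_e (he : (KMtensor pair C1 C2).e i (b1, b2) = some p) :
    (KMtensor pair C1 C2).wt p = (KMtensor pair C1 C2).wt (b1, b2) + α i := by
  rcases e_eq_some_iff.mp he with ⟨-, c, hc, rfl⟩ | ⟨-, c, hc, rfl⟩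
  · rw [wt_mk, wt_mk, h1.wt_e i b1 c hc, add_right_comm]
  · rw [wt_mk, wt_mk, h2.wt_e i b2 c hc, add_assoc]

theorem eps_e (he : (KMtensor pair C1 C2).e i (b1, b2) = some p) :
    (KMtensor pair C1 C2).eps i p =
      (KMtensor pair C1 C2).eps i (b1, b2) + ((-1 : ℤ) : WithBot ℤ) := by
  rcases e_eq_some_iff.mp he with ⟨h, c, hc, rfl⟩ | ⟨h, c, hc, rfl⟩
  · rw [eps_of_le h1 ((h1.lt_phi_e_iff hc).mpr h).le, eps_of_le h1 h, h1.eps_e i b1 c hc]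
  · rw [eps_of_ge h1 ((h2.le_eps_e_iff hc).mpr h), eps_of_ge h1 h.le, h2.eps_e i b2 c hc,
      add_right_comm]

theorem phi_e (he : (KMtensor pair C1 C2).e i (b1, b2) = some p) :
    (KMtensor pair C1 C2).phi i p =
      (KMtensor pair C1 C2).phi i (b1, b2) + ((1 : ℤ) : WithBot ℤ) := by
  rcases e_eq_some_iff.mp he with ⟨h, c, hc, rfl⟩ | ⟨h, c, hc, rfl⟩
  · rw [phi_of_le h2 ((h1.lt_phi_e_iff hc).mpr h).le, phi_of_le h2 h, h1.phi_e i b1 c hc,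
      add_right_comm]
  · rw [phi_of_ge h2 ((h2.le_eps_e_iff hc).mpr h), phi_of_ge h2 h.le, h2.phi_e i b2 c hc]

theorem f_eq_some_of_e_eq_some (he : (KMtensor pair C1 C2).e i (b1, b2) = some p) :
    (KMtensor pair C1 C2).f i p = some (b1, b2) := by
  rcases e_eq_some_iff.mp he with ⟨h, c, hc, rfl⟩ | ⟨h, c, hc, rfl⟩
  · exact f_eq_some_iff.mpr (.inl ⟨(h1.lt_phi_e_iff hc).mpr h, b1, (h1.ef i c b1).mpr hc, rfl⟩)
  · exact f_eq_some_iff.mpr (.inr ⟨(h2.le_eps_e_iff hc).mpr h, b2, (h2.ef i c b2).mpr hc, rfl⟩)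

theorem e_eq_some_of_f_eq_some (hf : (KMtensor pair C1 C2).f i (b1, b2) = some p) :
    (KMtensor pair C1 C2).e i p = some (b1, b2) := by
  rcases f_eq_some_iff.mp hf with ⟨h, c, hc, rfl⟩ | ⟨h, c, hc, rfl⟩
  · have he := (h1.ef i b1 c).mp hc
    exact e_eq_some_iff.mpr (.inl ⟨(h1.lt_phi_e_iff he).mp h, b1, he, rfl⟩)
  · have he := (h2.ef i b2 c).mp hc
    exact e_eq_some_iff.mpr (.inr ⟨(h2.le_eps_e_iff he).mp h, b2, he, rfl⟩)

theorem phi_bot (hbot : (KMtensor pair C1 C2).phi i (b1, b2) = ⊥) :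
    (KMtensor pair C1 C2).e i (b1, b2) = none ∧ (KMtensor pair C1 C2).f i (b1, b2) = none := by
  obtain ⟨hb2, hb1⟩ := max_eq_bot.mp hbot
  obtain ⟨he1, hf1⟩ := h1.phi_bot i b1 (WithBot.add_coe_eq_bot_iff.mp hb1)
  obtain ⟨he2, hf2⟩ := h2.phi_bot i b2 hb2
  simp [KMtensor, he1, hf1, he2, hf2]

end KMtensor

/-- If `B₁` and `B₂` are crystals associated with a symmetrizable
Kac–Moody algebra, then `B₁ × B₂` equipped with the tensor product maps again
satisfies all the crystal axioms. -/
theorem tensor_product_is_crystal {I P B1 B2 : Type} [AddCommGroup P]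
    (α : I → P) (pair : I → P →+ ℤ)
    (C1 : KMCrystalData I P B1) (C2 : KMCrystalData I P B2)
    (h1 : IsKMCrystal α pair C1) (h2 : IsKMCrystal α pair C2) :
    IsKMCrystal α pair (KMtensor pair C1 C2) :=
  IsKMCrystal.of_e
    (fun _ _ ↦ KMtensor.phi_eq h1 h2)
    (fun _ _ _ ↦ KMtensor.wt_e h1 h2)
    (fun _ _ _ ↦ KMtensor.eps_e h1 h2)
    (fun _ _ _ ↦ KMtensor.phi_e h1 h2)
    (fun _ _ _ ↦ ⟨KMtensor.e_eq_some_of_f_eq_some h1 h2, KMtensor.f_eq_some_of_e_eq_some h1 h2⟩)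
    (fun _ _ ↦ KMtensor.phi_bot h1 h2)
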